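/- arXiv:2403.04725 — 5 statements merged into one kernel-verified Lean document; each statement's English description precedes it below -/
import Mathlib

section
/- Let φ° be a norm on ℝ^N and let u1, u2 : εℤ^N → ℝ be (1,φ°)-Lipschitz functions with u1 ≤ u2 pointwise. Then sd(u1) ≤ sd(u2), where sd(u) := (sd^+(u) + sd^-(u))/2 with sd^± defined via the inf/sup-convolution formulas: d^-(u)_i = sup_{u_j ≥ 0}(u_j − φ°(i−j)), sd^-(u)_i = inf_{u_j ≤ 0}(d^-(u)_j + φ°(i−j)), d^+(u)_i = inf_{u_j ≤ 0}(u_j + φ°(i−j)), sd^+(u)_i = sup_{u_j ≥ 0}(d^+(u)_j − φ°(i−j)). -/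
open scoped BigOperators

noncomputable def latPt (N : ℕ) (ε : ℝ) (i : Fin N → ℤ) : Fin N → ℝ :=
  fun k => ε * (i k : ℝ)

def IsNorm (N : ℕ) (φ : (Fin N → ℝ) → ℝ) : Prop :=
  (∀ v, φ v = 0 ↔ v = 0) ∧ (∀ (c : ℝ) v, φ (c • v) = |c| * φ v) ∧
    (∀ v w, φ (v + w) ≤ φ v + φ w)

def PhiLip (N : ℕ) (ε : ℝ) (φ : (Fin N → ℝ) → ℝ) (u : (Fin N → ℤ) → ℝ) : Prop :=
  ∀ i j, |u i - u j| ≤ φ (latPt N ε i - latPt N ε j)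

noncomputable def dminus (N : ℕ) (ε : ℝ) (φ : (Fin N → ℝ) → ℝ)
    (u : (Fin N → ℤ) → ℝ) (i : Fin N → ℤ) : ℝ :=
  sSup {x : ℝ | ∃ j, 0 ≤ u j ∧ x = u j - φ (latPt N ε i - latPt N ε j)}

noncomputable def sdminus (N : ℕ) (ε : ℝ) (φ : (Fin N → ℝ) → ℝ)
    (u : (Fin N → ℤ) → ℝ) (i : Fin N → ℤ) : ℝ :=
  sInf {x : ℝ | ∃ j, u j ≤ 0 ∧ x = dminus N ε φ u j + φ (latPt N ε i - latPt N ε j)}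

noncomputable def dplus (N : ℕ) (ε : ℝ) (φ : (Fin N → ℝ) → ℝ)
    (u : (Fin N → ℤ) → ℝ) (i : Fin N → ℤ) : ℝ :=
  sInf {x : ℝ | ∃ j, u j ≤ 0 ∧ x = u j + φ (latPt N ε i - latPt N ε j)}

noncomputable def sdplus (N : ℕ) (ε : ℝ) (φ : (Fin N → ℝ) → ℝ)
    (u : (Fin N → ℤ) → ℝ) (i : Fin N → ℤ) : ℝ :=
  sSup {x : ℝ | ∃ j, 0 ≤ u j ∧ x = dplus N ε φ u j - φ (latPt N ε i - latPt N ε j)}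

noncomputable def sdfun (N : ℕ) (ε : ℝ) (φ : (Fin N → ℝ) → ℝ)
    (u : (Fin N → ℤ) → ℝ) (i : Fin N → ℤ) : ℝ :=
  (sdplus N ε φ u i + sdminus N ε φ u i) / 2

theorem sd_monotone (N : ℕ) (ε : ℝ) (hε : 0 < ε)
    (φ : (Fin N → ℝ) → ℝ) (hφ : IsNorm N φ)
    (u1 u2 : (Fin N → ℤ) → ℝ)
    (hu1 : PhiLip N ε φ u1) (hu2 : PhiLip N ε φ u2)
    (h1le : ∃ j, u1 j ≤ 0) (h1ge : ∃ j, 0 ≤ u1 j)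
    (h2le : ∃ j, u2 j ≤ 0) (h2ge : ∃ j, 0 ≤ u2 j)
    (hle : ∀ i, u1 i ≤ u2 i) :
    ∀ i, sdfun N ε φ u1 i ≤ sdfun N ε φ u2 i := by
  obtain ⟨hzero, hhom, htri⟩ := hφ
  have hφ0 : φ 0 = 0 := (hzero 0).mpr rfl
  have hsym : ∀ v, φ (-v) = φ v := by
    intro v
    have h := hhom (-1) v
    simpa using h
  have hsym' : ∀ a b : Fin N → ℝ, φ (a - b) = φ (b - a) := by
    intro a b
    rw [← hsym (b - a), neg_sub]
  have htri' : ∀ a b c : Fin N → ℝ, φ (a - b) ≤ φ (a - c) + φ (c - b) := by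
    intro a b c
    have h := htri (a - c) (c - b)
    rwa [sub_add_sub_cancel] at h
  -- bounded above: dminus sets
  have bddA_dm : ∀ (u : (Fin N → ℤ) → ℝ), PhiLip N ε φ u → ∀ i,
      BddAbove {x : ℝ | ∃ j, 0 ≤ u j ∧ x = u j - φ (latPt N ε i - latPt N ε j)} := by
    intro u hu i
    refine ⟨u i, ?_⟩
    rintro x ⟨j, hj, rfl⟩
    have h2 := (abs_le.mp (hu j i)).2
    rw [hsym'] at h2
    linarith
  -- bounded below: dplus sets
  have bddB_dp : ∀ (u : (Fin N → ℤ) → ℝ), PhiLip N ε φ u → ∀ i,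
      BddBelow {x : ℝ | ∃ j, u j ≤ 0 ∧ x = u j + φ (latPt N ε i - latPt N ε j)} := by
    intro u hu i
    refine ⟨u i, ?_⟩
    rintro x ⟨j, hj, rfl⟩
    have h2 := (abs_le.mp (hu i j)).2
    linarith
  -- bounded below: sdminus sets
  have bddB_sdm : ∀ (u : (Fin N → ℤ) → ℝ), PhiLip N ε φ u → ∀ (j0 : Fin N → ℤ), 0 ≤ u j0 → ∀ i,
      BddBelow {x : ℝ | ∃ j, u j ≤ 0 ∧ x = dminus N ε φ u j + φ (latPt N ε i - latPt N ε j)} := by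
    intro u hu j0 hj0 i
    refine ⟨u j0 - φ (latPt N ε i - latPt N ε j0), ?_⟩
    rintro x ⟨j, hj, rfl⟩
    have h1 : u j0 - φ (latPt N ε j - latPt N ε j0) ≤ dminus N ε φ u j :=
      le_csSup (bddA_dm u hu j) ⟨j0, hj0, rfl⟩
    have h2 := htri' (latPt N ε j) (latPt N ε j0) (latPt N ε i)
    have h3 := hsym' (latPt N ε j) (latPt N ε i)
    linarith
  -- bounded above: sdplus sets
  have bddA_sdp : ∀ (u : (Fin N → ℤ) → ℝ), PhiLip N ε φ u → ∀ (j1 : Fin N → ℤ), u j1 ≤ 0 → ∀ i,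
      BddAbove {x : ℝ | ∃ j, 0 ≤ u j ∧ x = dplus N ε φ u j - φ (latPt N ε i - latPt N ε j)} := by
    intro u hu j1 hj1 i
    refine ⟨u j1 + φ (latPt N ε i - latPt N ε j1), ?_⟩
    rintro x ⟨j, hj, rfl⟩
    have h1 : dplus N ε φ u j ≤ u j1 + φ (latPt N ε j - latPt N ε j1) :=
      csInf_le (bddB_dp u hu j) ⟨j1, hj1, rfl⟩
    have h2 := htri' (latPt N ε j) (latPt N ε j1) (latPt N ε i)
    have h3 := hsym' (latPt N ε j) (latPt N ε i)
    linarith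
  obtain ⟨j1le, hj1le⟩ := h1le
  obtain ⟨j1ge, hj1ge⟩ := h1ge
  obtain ⟨j2le, hj2le⟩ := h2le
  obtain ⟨j2ge, hj2ge⟩ := h2ge
  -- monotonicity of dminus
  have hdm : ∀ i, dminus N ε φ u1 i ≤ dminus N ε φ u2 i := by
    intro i
    rw [dminus, dminus]
    refine csSup_le ⟨u1 j1ge - φ (latPt N ε i - latPt N ε j1ge), j1ge, hj1ge, rfl⟩ ?_
    rintro x ⟨j, hj, rfl⟩
    refine le_trans ?_ (le_csSup (bddA_dm u2 hu2 i) ⟨j, le_trans hj (hle j), rfl⟩)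
    have := hle j
    linarith
  -- monotonicity of dplus
  have hdp : ∀ i, dplus N ε φ u1 i ≤ dplus N ε φ u2 i := by
    intro i
    rw [dplus, dplus]
    refine le_csInf ⟨u2 j2le + φ (latPt N ε i - latPt N ε j2le), j2le, hj2le, rfl⟩ ?_
    rintro x ⟨j, hj, rfl⟩
    refine le_trans (csInf_le (bddB_dp u1 hu1 i) ⟨j, le_trans (hle j) hj, rfl⟩) ?_
    have := hle j
    linarith
  -- monotonicity of sdminus
  have hsdm : ∀ i, sdminus N ε φ u1 i ≤ sdminus N ε φ u2 i := by
    intro i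
    rw [sdminus, sdminus]
    refine le_csInf ⟨dminus N ε φ u2 j2le + φ (latPt N ε i - latPt N ε j2le), j2le, hj2le, rfl⟩ ?_
    rintro x ⟨j, hj, rfl⟩
    refine le_trans (csInf_le (bddB_sdm u1 hu1 j1ge hj1ge i) ⟨j, le_trans (hle j) hj, rfl⟩) ?_
    have := hdm j
    linarith
  -- monotonicity of sdplus
  have hsdp : ∀ i, sdplus N ε φ u1 i ≤ sdplus N ε φ u2 i := by
    intro i
    rw [sdplus, sdplus]
    refine csSup_le ⟨dplus N ε φ u1 j1ge - φ (latPt N ε i - latPt N ε j1ge), j1ge, hj1ge, rfl⟩ ?_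
    rintro x ⟨j, hj, rfl⟩
    refine le_trans ?_ (le_csSup (bddA_sdp u2 hu2 j2le hj2le i) ⟨j, le_trans hj (hle j), rfl⟩)
    have := hdp j
    linarith
  intro i
  have h1 := hsdm i
  have h2 := hsdp i
  unfold sdfun
  linarith
end

section
/- Let φ° be a norm on ℝ^N, u : εℤ^N → ℝ a (1,φ°)-Lipschitz function, and s > 0. Then sd(u − s) ≤ sd(u) − s, where sd is the discrete signed-distance operator sd(u) = (sd^+(u) + sd^-(u))/2 built from the inf/sup-convolutions with kernel φ°. -/
open scoped BigOperators

section helpers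

variable {N : ℕ} {ε : ℝ} {φ : (Fin N → ℝ) → ℝ}

lemma phi_symm (hφ : IsNorm N φ) (a b : Fin N → ℝ) : φ (a - b) = φ (b - a) := by
  have h := hφ.2.1 (-1) (b - a)
  rw [neg_one_smul] at h
  rw [show a - b = -(b - a) by abel, h]
  simp

lemma phi_tri (hφ : IsNorm N φ) (a b c : Fin N → ℝ) :
    φ (a - c) ≤ φ (a - b) + φ (b - c) := by
  have h := hφ.2.2 (a - b) (b - c)
  rwa [show a - b + (b - c) = a - c by abel] at h

lemma dminus_bddAbove (hφ : IsNorm N φ) {u : (Fin N → ℤ) → ℝ} (hu : PhiLip N ε φ u)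
    {j0 : Fin N → ℤ} (hj0 : u j0 ≤ 0) (i : Fin N → ℤ) :
    BddAbove {x : ℝ | ∃ j, 0 ≤ u j ∧ x = u j - φ (latPt N ε i - latPt N ε j)} := by
  refine ⟨φ (latPt N ε i - latPt N ε j0), ?_⟩
  rintro _ ⟨j, hj, rfl⟩
  have hlip := (abs_le.mp (hu j j0)).2
  have htri := phi_tri hφ (latPt N ε j) (latPt N ε i) (latPt N ε j0)
  have hsym := phi_symm hφ (latPt N ε j) (latPt N ε i)
  linarith

lemma dplus_bddBelow (hφ : IsNorm N φ) {u : (Fin N → ℤ) → ℝ} (hu : PhiLip N ε φ u)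
    {k0 : Fin N → ℤ} (hk0 : 0 ≤ u k0) (i : Fin N → ℤ) :
    BddBelow {x : ℝ | ∃ j, u j ≤ 0 ∧ x = u j + φ (latPt N ε i - latPt N ε j)} := by
  refine ⟨u k0 - φ (latPt N ε i - latPt N ε k0), ?_⟩
  rintro _ ⟨j, hj, rfl⟩
  have hlip := (abs_le.mp (hu k0 j)).2
  have htri := phi_tri hφ (latPt N ε j) (latPt N ε i) (latPt N ε k0)
  have hsym := phi_symm hφ (latPt N ε k0) (latPt N ε j)
  have hsym2 := phi_symm hφ (latPt N ε j) (latPt N ε i)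
  linarith

lemma dminus_ge (hφ : IsNorm N φ) {u : (Fin N → ℤ) → ℝ} (hu : PhiLip N ε φ u)
    {j0 : Fin N → ℤ} (hj0 : u j0 ≤ 0) {k : Fin N → ℤ} (hk : 0 ≤ u k) (i : Fin N → ℤ) :
    u k - φ (latPt N ε i - latPt N ε k) ≤ dminus N ε φ u i :=
  le_csSup (dminus_bddAbove hφ hu hj0 i) ⟨k, hk, rfl⟩

lemma dplus_le (hφ : IsNorm N φ) {u : (Fin N → ℤ) → ℝ} (hu : PhiLip N ε φ u)
    {k0 : Fin N → ℤ} (hk0 : 0 ≤ u k0) {k : Fin N → ℤ} (hk : u k ≤ 0) (i : Fin N → ℤ) :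
    dplus N ε φ u i ≤ u k + φ (latPt N ε i - latPt N ε k) :=
  csInf_le (dplus_bddBelow hφ hu hk0 i) ⟨k, hk, rfl⟩

lemma sdminus_bddBelow (hφ : IsNorm N φ) {u : (Fin N → ℤ) → ℝ} (hu : PhiLip N ε φ u)
    {k0 : Fin N → ℤ} (hk0 : 0 ≤ u k0) (i : Fin N → ℤ) :
    BddBelow {x : ℝ | ∃ j, u j ≤ 0 ∧ x = dminus N ε φ u j + φ (latPt N ε i - latPt N ε j)} := by
  refine ⟨u k0 - φ (latPt N ε i - latPt N ε k0), ?_⟩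
  rintro _ ⟨j, hj, rfl⟩
  have hd := dminus_ge hφ hu hj hk0 j
  have htri := phi_tri hφ (latPt N ε j) (latPt N ε i) (latPt N ε k0)
  have hsym := phi_symm hφ (latPt N ε j) (latPt N ε i)
  linarith

lemma sdplus_bddAbove (hφ : IsNorm N φ) {u : (Fin N → ℤ) → ℝ} (hu : PhiLip N ε φ u)
    {k1 : Fin N → ℤ} (hk1 : u k1 ≤ 0) (i : Fin N → ℤ) :
    BddAbove {x : ℝ | ∃ j, 0 ≤ u j ∧ x = dplus N ε φ u j - φ (latPt N ε i - latPt N ε j)} := by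
  refine ⟨u k1 + φ (latPt N ε i - latPt N ε k1), ?_⟩
  rintro _ ⟨j, hj, rfl⟩
  have hd := dplus_le hφ hu hj hk1 j
  have htri := phi_tri hφ (latPt N ε j) (latPt N ε i) (latPt N ε k1)
  have hsym := phi_symm hφ (latPt N ε j) (latPt N ε i)
  linarith

end helpers


section helpers2
variable {N : ℕ} {ε : ℝ} {φ : (Fin N → ℝ) → ℝ} {u : (Fin N → ℤ) → ℝ}

lemma dminus_le {b : ℝ} (hne : ∃ k, 0 ≤ u k) (i : Fin N → ℤ)
    (h : ∀ k, 0 ≤ u k → u k - φ (latPt N ε i - latPt N ε k) ≤ b) :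
    dminus N ε φ u i ≤ b := by
  obtain ⟨k, hk⟩ := hne
  refine csSup_le ⟨_, k, hk, rfl⟩ ?_
  rintro _ ⟨j, hj, rfl⟩
  exact h j hj

lemma dplus_ge {b : ℝ} (hne : ∃ k, u k ≤ 0) (i : Fin N → ℤ)
    (h : ∀ k, u k ≤ 0 → b ≤ u k + φ (latPt N ε i - latPt N ε k)) :
    b ≤ dplus N ε φ u i := by
  obtain ⟨k, hk⟩ := hne
  refine le_csInf ⟨_, k, hk, rfl⟩ ?_
  rintro _ ⟨j, hj, rfl⟩
  exact h j hj

lemma sdminus_ge {b : ℝ} (hne : ∃ k, u k ≤ 0) (i : Fin N → ℤ)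
    (h : ∀ j, u j ≤ 0 → b ≤ dminus N ε φ u j + φ (latPt N ε i - latPt N ε j)) :
    b ≤ sdminus N ε φ u i := by
  obtain ⟨k, hk⟩ := hne
  refine le_csInf ⟨_, k, hk, rfl⟩ ?_
  rintro _ ⟨j, hj, rfl⟩
  exact h j hj

lemma sdplus_le {b : ℝ} (hne : ∃ k, 0 ≤ u k) (i : Fin N → ℤ)
    (h : ∀ j, 0 ≤ u j → dplus N ε φ u j - φ (latPt N ε i - latPt N ε j) ≤ b) :
    sdplus N ε φ u i ≤ b := by
  obtain ⟨k, hk⟩ := hne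
  refine csSup_le ⟨_, k, hk, rfl⟩ ?_
  rintro _ ⟨j, hj, rfl⟩
  exact h j hj

lemma sdminus_le (hφ : IsNorm N φ) (hu : PhiLip N ε φ u)
    {k0 : Fin N → ℤ} (hk0 : 0 ≤ u k0) {j : Fin N → ℤ} (hj : u j ≤ 0) (i : Fin N → ℤ) :
    sdminus N ε φ u i ≤ dminus N ε φ u j + φ (latPt N ε i - latPt N ε j) :=
  csInf_le (sdminus_bddBelow hφ hu hk0 i) ⟨j, hj, rfl⟩

lemma sdplus_ge (hφ : IsNorm N φ) (hu : PhiLip N ε φ u)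
    {k1 : Fin N → ℤ} (hk1 : u k1 ≤ 0) {j : Fin N → ℤ} (hj : 0 ≤ u j) (i : Fin N → ℤ) :
    dplus N ε φ u j - φ (latPt N ε i - latPt N ε j) ≤ sdplus N ε φ u i :=
  le_csSup (sdplus_bddAbove hφ hu hk1 i) ⟨j, hj, rfl⟩

end helpers2

theorem sd_shift (N : ℕ) (ε : ℝ) (hε : 0 < ε)
    (φ : (Fin N → ℝ) → ℝ) (hφ : IsNorm N φ)
    (u : (Fin N → ℤ) → ℝ) (hu : PhiLip N ε φ u)
    (s : ℝ) (hs : 0 < s)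
    (h1 : ∃ j, u j ≤ 0) (h2 : ∃ j, 0 ≤ u j)
    (h3 : ∃ j, u j - s ≤ 0) (h4 : ∃ j, 0 ≤ u j - s) :
    ∀ i, sdfun N ε φ (fun j => u j - s) i ≤ sdfun N ε φ u i - s := by
  intro i
  set v : (Fin N → ℤ) → ℝ := fun j => u j - s with hv
  have huv : PhiLip N ε φ v := by
    intro a b
    have := hu a b
    simpa [hv, sub_sub_sub_cancel_right] using this
  have h3v : ∃ j, v j ≤ 0 := h3
  have h4v : ∃ j, 0 ≤ v j := h4
  obtain ⟨j1, hj1⟩ := h1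
  obtain ⟨k4, hk4'⟩ := h4v
  -- minus part
  have hminus : sdminus N ε φ v i + s ≤ sdminus N ε φ u i := by
    refine sdminus_ge ⟨j1, hj1⟩ i ?_
    intro j hj
    have hvj : v j ≤ 0 := by simp only [hv]; linarith
    have hstep := sdminus_le hφ huv hk4' hvj i
    have hd : dminus N ε φ v j ≤ dminus N ε φ u j - s := by
      refine dminus_le ⟨k4, hk4'⟩ j ?_
      intro k hk
      have huk : 0 ≤ u k := by simp only [hv] at hk; linarith
      have := dminus_ge hφ hu hj1 huk j
      simp only [hv]
      linarith
    linarith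
  -- plus part
  have hplus : sdplus N ε φ v i ≤ sdplus N ε φ u i - s := by
    refine sdplus_le ⟨k4, hk4'⟩ i ?_
    intro j hj
    have huj : 0 ≤ u j := by simp only [hv] at hj; linarith
    have hd : dplus N ε φ v j + s ≤ dplus N ε φ u j := by
      refine dplus_ge ⟨j1, hj1⟩ j ?_
      intro k hk
      have hvk : v k ≤ 0 := by simp only [hv]; linarith
      have := dplus_le hφ huv hk4' hvk j
      simp only [hv] at this
      linarith
    have hub := sdplus_ge hφ hu hj1 huj i
    linarith
  have hsdm : sdminus N ε φ v i ≤ sdminus N ε φ u i - s := by linarith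
  unfold sdfun
  linarith
end

section
/- Let φ° be a norm on ℝ^N and u : εℤ^N → ℝ a (1,φ°)-Lipschitz function with nonempty sets {u ≤ 0} and {u ≥ 0}. Then sd^-(u) ≤ sd^+(u) pointwise on εℤ^N, where sd^±(u) are defined by the inf/sup-convolution formulas d^-(u)_i = sup_{u_j≥0}(u_j − φ°(i−j)), sd^-(u)_i = inf_{u_j≤0}(d^-(u)_j + φ°(i−j)), d^+(u)_i = inf_{u_j≤0}(u_j + φ°(i−j)), sd^+(u)_i = sup_{u_j≥0}(d^+(u)_j − φ°(i−j)). -/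
open scoped BigOperators

theorem sdminus_le_sdplus (N : ℕ) (ε : ℝ) (hε : 0 < ε)
    (φ : (Fin N → ℝ) → ℝ) (hφ : IsNorm N φ)
    (u : (Fin N → ℤ) → ℝ) (hu : PhiLip N ε φ u)
    (hne1 : ∃ j, u j ≤ 0) (hne2 : ∃ j, 0 ≤ u j) :
    ∀ i, sdminus N ε φ u i ≤ sdplus N ε φ u i := by
  obtain ⟨hφ0, hφh, hφt⟩ := hφ
  have hzero : φ 0 = 0 := (hφ0 0).2 rfl
  have hsym : ∀ a b : Fin N → ℤ,
      φ (latPt N ε a - latPt N ε b) = φ (latPt N ε b - latPt N ε a) := by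
    intro a b
    have h : latPt N ε a - latPt N ε b = (-1 : ℝ) • (latPt N ε b - latPt N ε a) := by
      funext r; simp [latPt]
    rw [h, hφh]; simp
  have htri : ∀ a b c : Fin N → ℤ,
      φ (latPt N ε a - latPt N ε c) ≤
        φ (latPt N ε a - latPt N ε b) + φ (latPt N ε b - latPt N ε c) := by
    intro a b c
    have h : latPt N ε a - latPt N ε c =
        (latPt N ε a - latPt N ε b) + (latPt N ε b - latPt N ε c) := by
      funext r; simp
    rw [h]; exact hφt _ _
  have hDii : ∀ a : Fin N → ℤ, φ (latPt N ε a - latPt N ε a) = 0 := by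
    intro a; rw [sub_self, hzero]
  have hlip : ∀ a b, u a - u b ≤ φ (latPt N ε a - latPt N ε b) :=
    fun a b => (le_abs_self _).trans (hu a b)
  obtain ⟨k, hk⟩ := hne1
  obtain ⟨m, hm⟩ := hne2
  -- bounds for the inner sets
  have hbddA : ∀ a, BddAbove {x : ℝ | ∃ j, 0 ≤ u j ∧ x = u j - φ (latPt N ε a - latPt N ε j)} := by
    intro a
    refine ⟨u a, ?_⟩
    rintro x ⟨j, hj, rfl⟩
    have h1 := hlip j a
    have h2 := hsym a j
    linarith
  have hbddB : ∀ a, BddBelow {x : ℝ | ∃ j, u j ≤ 0 ∧ x = u j + φ (latPt N ε a - latPt N ε j)} := by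
    intro a
    refine ⟨u a, ?_⟩
    rintro x ⟨j, hj, rfl⟩
    have h1 := hlip a j
    linarith
  have hdm_le : ∀ a, dminus N ε φ u a ≤ u a := by
    intro a
    apply csSup_le
    · exact ⟨_, m, hm, rfl⟩
    rintro x ⟨j, hj, rfl⟩
    have h1 := hlip j a
    have h2 := hsym a j
    linarith
  have hle_dp : ∀ a, u a ≤ dplus N ε φ u a := by
    intro a
    apply le_csInf
    · exact ⟨_, k, hk, rfl⟩
    rintro x ⟨j, hj, rfl⟩
    have h1 := hlip a j
    linarith
  have hdm_ge : ∀ a b, 0 ≤ u b →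
      u b - φ (latPt N ε a - latPt N ε b) ≤ dminus N ε φ u a :=
    fun a b hb => le_csSup (hbddA a) ⟨b, hb, rfl⟩
  have hdp_le : ∀ a b, u b ≤ 0 →
      dplus N ε φ u a ≤ u b + φ (latPt N ε a - latPt N ε b) :=
    fun a b hb => csInf_le (hbddB a) ⟨b, hb, rfl⟩
  intro i
  have hT_bdd : BddBelow {x : ℝ | ∃ j, u j ≤ 0 ∧
      x = dminus N ε φ u j + φ (latPt N ε i - latPt N ε j)} := by
    refine ⟨u m - φ (latPt N ε i - latPt N ε m), ?_⟩
    rintro x ⟨j, hj, rfl⟩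
    have h1 := hdm_ge j m hm
    have h2 := htri j i m
    have h3 := hsym j i
    linarith
  have hS_bdd : BddAbove {x : ℝ | ∃ j, 0 ≤ u j ∧
      x = dplus N ε φ u j - φ (latPt N ε i - latPt N ε j)} := by
    refine ⟨u k + φ (latPt N ε i - latPt N ε k), ?_⟩
    rintro x ⟨j, hj, rfl⟩
    have h1 := hdp_le j k hk
    have h2 := htri j i k
    have h3 := hsym j i
    linarith
  rcases le_total (u i) 0 with hui | hui
  · -- u i ≤ 0
    have h1 : sdminus N ε φ u i ≤ dminus N ε φ u i := by
      have hmem : dminus N ε φ u i ∈ {x : ℝ | ∃ j, u j ≤ 0 ∧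
          x = dminus N ε φ u j + φ (latPt N ε i - latPt N ε j)} := by
        exact ⟨i, hui, by rw [hDii i]; ring⟩
      exact csInf_le hT_bdd hmem
    have h2 : dminus N ε φ u i ≤ sdplus N ε φ u i := by
      apply csSup_le
      · exact ⟨_, m, hm, rfl⟩
      rintro x ⟨j, hj, rfl⟩
      have h3 : u j - φ (latPt N ε i - latPt N ε j) ≤
          dplus N ε φ u j - φ (latPt N ε i - latPt N ε j) := by
        have := hle_dp j; linarith
      exact h3.trans (le_csSup hS_bdd ⟨j, hj, rfl⟩)
    exact h1.trans h2
  · -- 0 ≤ u i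
    have h1 : sdminus N ε φ u i ≤ dplus N ε φ u i := by
      apply le_csInf
      · exact ⟨_, k, hk, rfl⟩
      rintro x ⟨j, hj, rfl⟩
      have h3 : sdminus N ε φ u i ≤ dminus N ε φ u j + φ (latPt N ε i - latPt N ε j) :=
        csInf_le hT_bdd ⟨j, hj, rfl⟩
      have h4 := hdm_le j
      linarith
    have h2 : dplus N ε φ u i ≤ sdplus N ε φ u i :=
      le_csSup hS_bdd ⟨i, hui, by rw [hDii i]; ring⟩
    exact h1.trans h2
end

section
/- Let φ be a norm on ℝ^N of the form φ(v) = Σ_{ℓ∈ℤ^N} β(ℓ)|v·ℓ| with β ≥ 0, symmetric, finitely supported. Let z ∈ ℝ^{εℤ^N×εℤ^N} satisfy |z_{i, i+εℓ}| ≤ β(ℓ) for all i ∈ εℤ^N, ℓ ∈ ℤ^N. Define the vector field 𝐳(x) := (1/ε) Σ_{j∈εℤ^N} z_{ij}(i−j) for x ∈ i + [0,ε)^N. Then φ°(𝐳(x)) ≤ 1 for every x ∈ ℝ^N, where φ° is the polar norm of φ. -/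
open scoped BigOperators

theorem polar_bound_of_discrete_field (N : ℕ) (ε : ℝ) (hε : 0 < ε)
    (β : (Fin N → ℤ) → ℝ) (hβ0 : ∀ ℓ, 0 ≤ β ℓ) (hβsym : ∀ ℓ, β (-ℓ) = β ℓ)
    (hfin : (Function.support β).Finite)
    (φ : (Fin N → ℝ) → ℝ)
    (hφ : ∀ v, φ v = ∑ᶠ ℓ : Fin N → ℤ, β ℓ * |∑ k, v k * (ℓ k : ℝ)|)
    (z : (Fin N → ℤ) → (Fin N → ℤ) → ℝ)
    (hz : ∀ (i ℓ : Fin N → ℤ), |z i (i + ℓ)| ≤ β ℓ)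
    (Z : (Fin N → ℤ) → Fin N → ℝ)
    (hZ : ∀ i k, Z i k = (1 / ε) * ∑ᶠ j : Fin N → ℤ, z i j * (ε * ((i k : ℝ) - (j k : ℝ)))) :
    ∀ i : Fin N → ℤ,
      sSup {t : ℝ | ∃ v : Fin N → ℝ, φ v ≤ 1 ∧ t = ∑ k, Z i k * v k} ≤ 1 := by
  intro i
  apply Real.sSup_le _ zero_le_one
  rintro t ⟨v, hv, rfl⟩
  set s := hfin.toFinset with hs
  have hz0 : ∀ ℓ, ℓ ∉ s → z i (i + ℓ) = 0 := by
    intro ℓ hℓ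
    have hβℓ : β ℓ = 0 := by
      by_contra h
      exact hℓ (hfin.mem_toFinset.2 h)
    have := hz i ℓ
    rw [hβℓ] at this
    exact abs_nonpos_iff.1 this
  -- rewrite Z
  have key : ∀ k, Z i k = ∑ ℓ ∈ s, z i (i + ℓ) * (-(ℓ k : ℝ)) := by
    intro k
    rw [hZ]
    have h1 : (∑ᶠ j : Fin N → ℤ, z i j * (ε * ((i k : ℝ) - (j k : ℝ))))
        = ∑ᶠ ℓ : Fin N → ℤ, z i (i + ℓ) * (ε * ((i k : ℝ) - (((i + ℓ) k : ℤ) : ℝ))) :=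
      (finsum_comp_equiv (Equiv.addLeft i)).symm
    rw [h1]
    rw [finsum_eq_sum_of_support_subset _ (s := s) (by
      intro ℓ hℓ
      by_contra hns
      simp [hz0 ℓ hns] at hℓ)]
    rw [Finset.mul_sum]
    refine Finset.sum_congr rfl fun ℓ _ => ?_
    have : (((i + ℓ) k : ℤ) : ℝ) = (i k : ℝ) + (ℓ k : ℝ) := by push_cast [Pi.add_apply]; ring
    rw [this]
    field_simp
    ring
  calc ∑ k, Z i k * v k
      = ∑ ℓ ∈ s, z i (i + ℓ) * ∑ k, (-(ℓ k : ℝ)) * v k := by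
        simp only [key, Finset.sum_mul, Finset.mul_sum]
        rw [Finset.sum_comm]
        refine Finset.sum_congr rfl fun ℓ _ => Finset.sum_congr rfl fun k _ => by ring
    _ ≤ ∑ ℓ ∈ s, β ℓ * |∑ k, v k * (ℓ k : ℝ)| := by
        refine Finset.sum_le_sum fun ℓ _ => ?_
        have h2 : |∑ k, (-(ℓ k : ℝ)) * v k| = |∑ k, v k * (ℓ k : ℝ)| := by
          rw [← abs_neg]
          congr 1
          rw [← Finset.sum_neg_distrib]
          exact Finset.sum_congr rfl fun k _ => by ring
        calc z i (i + ℓ) * ∑ k, (-(ℓ k : ℝ)) * v k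
            ≤ |z i (i + ℓ) * ∑ k, (-(ℓ k : ℝ)) * v k| := le_abs_self _
          _ = |z i (i + ℓ)| * |∑ k, (-(ℓ k : ℝ)) * v k| := abs_mul _ _
          _ ≤ β ℓ * |∑ k, v k * (ℓ k : ℝ)| := by
              rw [h2]; exact mul_le_mul_of_nonneg_right (hz i ℓ) (abs_nonneg _)
    _ = φ v := by
        rw [hφ]
        symm
        apply finsum_eq_sum_of_support_subset
        intro ℓ hℓ
        by_contra hns
        have hβℓ : β ℓ = 0 := by
          by_contra h
          exact hns (hfin.mem_toFinset.2 h)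
        simp [hβℓ] at hℓ
    _ ≤ 1 := hv
end

section
/- Let φ° be a norm on ℝ^N whose unit ball is the zonotope W_1 = Σ_{k=1}^m 2β_k(−e_k, e_k), with e_k ∈ ℤ^N spanning ℝ^N and β_k > 0 rational. Then there exists ℓ_1 > 0 such that for every ε > 0 and every i ∈ εℤ^N with φ°(i) ≥ 2εℓ_1, there exists j ∈ εℤ^N, j ≠ 0, with φ°(j) ≤ εℓ_1 and φ°(i) = φ°(j) + φ°(i − j). -/
open scoped BigOperators

/-!
Write `x = ∑ λ_k g_k` with `|λ_k| < φ(x) + δ`, where `g_k = 2β_k e_k` generate the unit ball.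
Shifting each coefficient with `|λ_k| > φ(x) + δ - L` by `L` towards `0` subtracts
`j = ∑ L σ_k g_k` with `σ_k ∈ {-1, 0, 1}`; since `L` is small compared with `φ(x)` no coefficient
overshoots, so `φ(x - j) ≤ φ(x) - L + δ` while `φ(j) ≤ L`. As there are only finitely many sign
vectors `σ`, one of them works for every `δ`, and the triangle inequality then forces
`φ(x) = φ(j) + φ(x - j)`. Taking `L` to be `ε` times a common denominator of the `β_k` makes `j`
a point of `εℤ^N`.
-/

lemma exists_abs_le_one_abs_sub_mul_le {a s L : ℝ} (ha : |a| ≤ s) (hL : 3 * L ≤ 2 * s) :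
    ∃ σ : ℤ, |σ| ≤ 1 ∧ |a - L * σ| ≤ s - L := by
  rcases le_or_gt |a| (s - L) with hsmall | hbig
  · exact ⟨0, by simp, by simpa using hsmall⟩
  rcases le_or_gt 0 a with hpos | hneg
  · rw [abs_of_nonneg hpos] at ha hbig
    refine ⟨1, by simp, abs_le.2 ⟨?_, ?_⟩⟩ <;> push_cast <;> linarith
  · rw [abs_of_neg hneg] at ha hbig
    refine ⟨-1, by simp, abs_le.2 ⟨?_, ?_⟩⟩ <;> push_cast <;> linarith

lemma Finset.exists_mem_le_of_forall_pos_exists_mem_le_add {α : Type*} {S : Finset α}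
    {f : α → ℝ} {a : ℝ} (h : ∀ δ > 0, ∃ x ∈ S, f x ≤ a + δ) : ∃ x ∈ S, f x ≤ a := by
  obtain ⟨x₁, hx₁, -⟩ := h 1 one_pos
  obtain ⟨x₀, hx₀, hmin⟩ := S.exists_min_image f ⟨x₁, hx₁⟩
  refine ⟨x₀, hx₀, le_of_forall_pos_le_add fun δ hδ => ?_⟩
  obtain ⟨x, hx, hle⟩ := h δ hδ
  exact (hmin x hx).trans hle

lemma exists_nat_pos_forall_mul_eq_int {ι : Type*} [Fintype ι] {β : ι → ℝ}
    (hrat : ∀ k, ∃ q : ℚ, β k = q) : ∃ L : ℕ, 0 < L ∧ ∃ c : ι → ℤ, ∀ k, (L : ℝ) * β k = c k := by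
  choose q hq using hrat
  refine ⟨∏ k, (q k).den, Finset.prod_pos fun k _ => (q k).pos, ?_⟩
  choose r hr using fun k => Finset.dvd_prod_of_mem (fun k => (q k).den) (Finset.mem_univ k)
  refine ⟨fun k => r k * (q k).num, fun k => ?_⟩
  rw [hq k, hr k]
  push_cast
  rw [mul_comm ((q k).den : ℝ), mul_assoc]
  congr 1
  exact_mod_cast Rat.den_mul_eq_num (q k)

section Zonotope

variable {E ι : Type*} [AddCommGroup E] [Module ℝ E] [Fintype ι] {φ : E → ℝ} {g : ι → E}

def openZonotope (g : ι → E) (r : ℝ) : Set E :=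
  {x | ∃ lam : ι → ℝ, (∀ k, |lam k| < r) ∧ x = ∑ k, lam k • g k}

lemma mem_openZonotope_iff_inv_smul {r : ℝ} (hr : 0 < r) {x : E} :
    x ∈ openZonotope g r ↔ r⁻¹ • x ∈ openZonotope g 1 := by
  constructor
  · rintro ⟨lam, hlam, rfl⟩
    refine ⟨fun k => r⁻¹ * lam k, fun k => ?_, by simp [Finset.smul_sum, smul_smul]⟩
    rw [abs_mul, abs_inv, abs_of_pos hr, inv_mul_lt_one₀ hr]
    exact hlam k
  · rintro ⟨lam, hlam, hx⟩
    refine ⟨fun k => r * lam k, fun k => ?_, ?_⟩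
    · rw [abs_mul, abs_of_pos hr]
      simpa using mul_lt_mul_of_pos_left (hlam k) hr
    · rw [← smul_inv_smul₀ hr.ne' x, hx]
      simp [Finset.smul_sum, smul_smul]

lemma lt_iff_mem_openZonotope (hhom : ∀ (c : ℝ) v, φ (c • v) = |c| * φ v)
    (hball : {x | φ x < 1} = openZonotope g 1) {s : ℝ} (hs : 0 < s) {x : E} :
    φ x < s ↔ x ∈ openZonotope g s := by
  rw [mem_openZonotope_iff_inv_smul hs, ← hball, Set.mem_ofPred_eq, hhom, abs_inv,
    abs_of_pos hs, inv_mul_lt_one₀ hs]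

lemma le_of_forall_abs_le (hhom : ∀ (c : ℝ) v, φ (c • v) = |c| * φ v)
    (hball : {x | φ x < 1} = openZonotope g 1) {lam : ι → ℝ} {s : ℝ} (hs : 0 ≤ s)
    (hlam : ∀ k, |lam k| ≤ s) : φ (∑ k, lam k • g k) ≤ s :=
  le_of_forall_pos_le_add fun δ hδ =>
    ((lt_iff_mem_openZonotope hhom hball (by linarith)).2
      ⟨lam, fun k => (hlam k).trans_lt (by linarith), rfl⟩).le

lemma exists_sign_le_add_sub (hhom : ∀ (c : ℝ) v, φ (c • v) = |c| * φ v)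
    (hball : {x | φ x < 1} = openZonotope g 1) {x : E} {L δ : ℝ} (hL0 : 0 ≤ L)
    (hL : 3 * L ≤ 2 * φ x) (hδ : 0 < δ) :
    ∃ σ : ι → ℤ, (∀ k, |σ k| ≤ 1) ∧ φ (x - ∑ k, (L * σ k) • g k) ≤ φ x + δ - L := by
  obtain ⟨lam, hlam, hx⟩ :=
    (lt_iff_mem_openZonotope hhom hball (by linarith)).1 (lt_add_of_pos_right (φ x) hδ)
  choose σ hσ hσlam using fun k =>
    exists_abs_le_one_abs_sub_mul_le (hlam k).le (by linarith : 3 * L ≤ 2 * (φ x + δ))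
  have hdiff : x - ∑ k, (L * σ k) • g k = ∑ k, (lam k - L * σ k) • g k := by
    simp only [hx, sub_smul, Finset.sum_sub_distrib]
  exact ⟨σ, hσ, hdiff ▸ le_of_forall_abs_le hhom hball (by linarith) hσlam⟩

lemma exists_sign_le_sub (hhom : ∀ (c : ℝ) v, φ (c • v) = |c| * φ v)
    (hball : {x | φ x < 1} = openZonotope g 1) {x : E} {L : ℝ} (hL0 : 0 ≤ L)
    (hL : 3 * L ≤ 2 * φ x) :
    ∃ σ : ι → ℤ, (∀ k, |σ k| ≤ 1) ∧ φ (x - ∑ k, (L * σ k) • g k) ≤ φ x - L := by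
  classical
  have hsigns (σ : ι → ℤ) : σ ∈ Fintype.piFinset (fun _ => Finset.Icc (-1 : ℤ) 1) ↔
      ∀ k, |σ k| ≤ 1 := by
    simp only [Fintype.mem_piFinset, Finset.mem_Icc, abs_le]
  obtain ⟨σ, hσ, hle⟩ := Finset.exists_mem_le_of_forall_pos_exists_mem_le_add
    (S := Fintype.piFinset fun _ => Finset.Icc (-1 : ℤ) 1)
    (f := fun σ => φ (x - ∑ k, (L * σ k) • g k)) (a := φ x - L) fun δ hδ => by
      obtain ⟨σ, hσ, hle⟩ := exists_sign_le_add_sub hhom hball hL0 hL hδ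
      exact ⟨σ, (hsigns σ).2 hσ, by linarith⟩
  exact ⟨σ, (hsigns σ).1 hσ, hle⟩

theorem exists_sign_additive_decomposition (hhom : ∀ (c : ℝ) v, φ (c • v) = |c| * φ v)
    (hsub : ∀ v w, φ (v + w) ≤ φ v + φ w) (hball : {x | φ x < 1} = openZonotope g 1)
    {x : E} {L : ℝ} (hL0 : 0 ≤ L) (hL : 3 * L ≤ 2 * φ x) :
    ∃ σ : ι → ℤ, (∀ k, |σ k| ≤ 1) ∧ φ (∑ k, (L * σ k) • g k) = L ∧
      φ (x - ∑ k, (L * σ k) • g k) = φ x - L := by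
  obtain ⟨σ, hσ, hrest⟩ := exists_sign_le_sub hhom hball hL0 hL
  set j := ∑ k, (L * σ k) • g k
  have hj : φ j ≤ L := le_of_forall_abs_le hhom hball hL0 fun k => by
    rw [abs_mul, abs_of_nonneg hL0]
    exact mul_le_of_le_one_right hL0 (by exact_mod_cast hσ k)
  have htri : φ x ≤ φ j + φ (x - j) := by simpa using hsub j (x - j)
  exact ⟨σ, hσ, by linarith, by linarith⟩

end Zonotope

theorem additive_decomposition_rational_general (N m : ℕ)
    (e : Fin m → Fin N → ℤ) (β : Fin m → ℝ)
    (hrat : ∀ k, ∃ q : ℚ, β k = (q : ℝ))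
    (φ : (Fin N → ℝ) → ℝ) (hφ : IsNorm N φ)
    (hball : {x | φ x < 1} = {x : Fin N → ℝ | ∃ lam : Fin m → ℝ,
      (∀ k, |lam k| < 1) ∧ x = fun n => ∑ k, 2 * β k * lam k * (e k n : ℝ)}) :
    ∃ ℓ1 > (0 : ℝ), ∀ ε > (0 : ℝ), ∀ i : Fin N → ℤ,
      2 * ε * ℓ1 ≤ φ (latPt N ε i) →
      ∃ j : Fin N → ℤ, j ≠ 0 ∧ φ (latPt N ε j) ≤ ε * ℓ1 ∧
        φ (latPt N ε i) = φ (latPt N ε j) + φ (latPt N ε i - latPt N ε j) := by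
  obtain ⟨-, hhom, hsub⟩ := hφ
  obtain ⟨L, hL, c, hc⟩ := exists_nat_pos_forall_mul_eq_int hrat
  set g : Fin m → Fin N → ℝ := fun k n => 2 * β k * e k n
  have hg (lam : Fin m → ℝ) :
      (fun n => ∑ k, 2 * β k * lam k * (e k n : ℝ)) = ∑ k, lam k • g k := by
    ext n
    simp only [Finset.sum_apply, Pi.smul_apply, smul_eq_mul, g]
    exact Finset.sum_congr rfl fun k _ => by ring
  have hball' : {x | φ x < 1} = openZonotope g 1 := by
    simp only [hball, hg]
    rfl
  refine ⟨L, by positivity, fun ε hε i hi => ?_⟩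
  obtain ⟨σ, -, hj, hrest⟩ := exists_sign_additive_decomposition hhom hsub hball'
    (x := latPt N ε i) (L := ε * L) (by positivity) (by nlinarith)
  have hlat : ∑ k, (ε * L * σ k) • g k = latPt N ε fun n => ∑ k, 2 * c k * σ k * e k n := by
    ext n
    simp only [latPt, Finset.sum_apply, Pi.smul_apply, smul_eq_mul, g]
    push_cast
    rw [Finset.mul_sum]
    refine Finset.sum_congr rfl fun k _ => ?_
    rw [← hc k]
    ring
  rw [hlat] at hj hrest
  refine ⟨_, fun h0 => ?_, hj.le, by rw [hj, hrest]; ring⟩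
  have hlat0 : latPt N ε 0 = 0 := by ext; simp [latPt]
  have hφ0 : φ (latPt N ε 0) = 0 := by simpa [hlat0] using hhom 0 0
  rw [h0, hφ0] at hj
  exact (mul_pos hε (Nat.cast_pos.2 hL)).ne hj

theorem additive_decomposition_rational (N m : ℕ)
    (e : Fin m → Fin N → ℤ) (β : Fin m → ℝ)
    (hβ : ∀ k, 0 < β k) (hrat : ∀ k, ∃ q : ℚ, β k = (q : ℝ))
    (hspan : Submodule.span ℝ (Set.range fun k => fun n => ((e k n : ℝ))) = ⊤)
    (φ : (Fin N → ℝ) → ℝ) (hφ : IsNorm N φ)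
    (hball : {x | φ x < 1} = {x : Fin N → ℝ | ∃ lam : Fin m → ℝ,
      (∀ k, |lam k| < 1) ∧ x = fun n => ∑ k, 2 * β k * lam k * (e k n : ℝ)}) :
    ∃ ℓ1 > (0 : ℝ), ∀ ε > (0 : ℝ), ∀ i : Fin N → ℤ,
      2 * ε * ℓ1 ≤ φ (latPt N ε i) →
      ∃ j : Fin N → ℤ, j ≠ 0 ∧ φ (latPt N ε j) ≤ ε * ℓ1 ∧
        φ (latPt N ε i) = φ (latPt N ε j) + φ (latPt N ε i - latPt N ε j) :=
  additive_decomposition_rational_general N m e β hrat φ hφ hball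
end
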